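/- arXiv:2601.15756 — 3 statements merged into one kernel-verified Lean document; each statement's English description precedes it below -/
import Mathlib

section
/- M-equivalence of finite and infinite words is preserved under infinite concatenation: if (σᵢ)ᵢ and (σᵢ')ᵢ are sequences of nonempty finite words with σᵢ ≡_M σᵢ' for all i ∈ ℕ, then the infinite concatenations σ₀σ₁σ₂⋯ and σ₀'σ₁'σ₂'⋯ are M-equivalent as infinite words, i.e., for every state p: (p, σ₀σ₁⋯, true) ∈ Δ^ω ⟺ (p, σ₀'σ₁'⋯, true) ∈ Δ^ω. -/
/-- `DeltaStar Δ F p w q b`: there is a finite run of the Büchi automaton with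
transition relation `Δ` and final states `F` from `p` to `q` reading the word `w`,
where `b` records whether the run visits a final state. -/
inductive DeltaStar {Q A : Type} (Δ : Q → A → Q → Prop) (F : Q → Bool) :
    Q → List A → Q → Bool → Prop
  | nil (p : Q) : DeltaStar Δ F p [] p (F p)
  | cons {q r : Q} {w : List A} {b : Bool} (p : Q) (a : A) :
      Δ p a q → DeltaStar Δ F q w r b → DeltaStar Δ F p (a :: w) r (F p || b)

/-- Two finite words are `M`-equivalent iff the extended transition relation `Δ*`
does not distinguish them. -/
def MEquiv {Q A : Type} (Δ : Q → A → Q → Prop) (F : Q → Bool) (w w' : List A) : Prop :=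
  ∀ p q b, DeltaStar Δ F p w q b ↔ DeltaStar Δ F p w' q b

/-- `DeltaOmega Δ F p ρ`: there is an infinite run starting in `p` reading the
infinite word `ρ` that visits a final state infinitely often, i.e. `(p, ρ, true) ∈ Δ^ω`. -/
def DeltaOmega {Q A : Type} (Δ : Q → A → Q → Prop) (F : Q → Bool) (p : Q) (ρ : ℕ → A) : Prop :=
  ∃ r : ℕ → Q, r 0 = p ∧ (∀ i, Δ (r i) (ρ i) (r (i + 1))) ∧ ∀ n, ∃ m, n ≤ m ∧ F (r m) = true

/-- Concatenation of a finite word with an infinite word. -/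
def appendInf {A : Type} (σ : List A) (ρ : ℕ → A) : ℕ → A := fun k =>
  if h : k < σ.length then σ.get ⟨k, h⟩ else ρ (k - σ.length)

/-- `IsFlatten σ ρ`: the infinite word `ρ` is the infinite concatenation `σ₀σ₁σ₂⋯`. -/
def IsFlatten {A : Type} (σ : ℕ → List A) (ρ : ℕ → A) : Prop :=
  ∀ n k (h : k < (σ n).length),
    ρ ((∑ i ∈ Finset.range n, (σ i).length) + k) = (σ n).get ⟨k, h⟩

/-!
Cutting an accepting run on `σ₀σ₁σ₂⋯` from `p` at the block boundaries yields states `q₀ = p, q₁, …`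
and flags `b₀, b₁, …` with `(qₙ, σₙ, qₙ₊₁, bₙ) ∈ Δ*` and `bₙ` true infinitely often; conversely,
finite runs witnessing such facts glue back into an accepting run. The existence of such `q, b`
sees the blocks only through `Δ*`, so it is unchanged when each `σₙ` is replaced by an
`M`-equivalent word.
-/

open Finset

section Glue

variable {α : Type*} {S : ℕ → ℕ}

lemma StrictMono.exists_le_lt_succ (hS : StrictMono S) (h0 : S 0 = 0) (j : ℕ) :
    ∃ n, S n ≤ j ∧ j < S (n + 1) := by
  classical
  have hex : ∃ n, j < S (n + 1) := ⟨j, (Nat.lt_succ_self j).trans_le hS.le_apply⟩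
  refine ⟨Nat.find hex, ?_, Nat.find_spec hex⟩
  rcases h : Nat.find hex with _ | n
  · simp [h0]
  · exact not_lt.1 (Nat.find_min hex (h ▸ Nat.lt_succ_self n))

lemma StrictMono.exists_glue (hS : StrictMono S) (g : ℕ → ℕ → α)
    (hg : ∀ n, g (n + 1) 0 = g n (S (n + 1) - S n)) :
    ∃ r : ℕ → α, ∀ n k, k ≤ S (n + 1) - S n → r (S n + k) = g n k := by
  classical
  have hex : ∀ j, ∃ n, j < S (n + 1) := fun j => ⟨j, (Nat.lt_succ_self j).trans_le hS.le_apply⟩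
  have hfind : ∀ {j n}, S n ≤ j → j < S (n + 1) → Nat.find (hex j) = n := fun h1 h2 =>
    (Nat.find_eq_iff _).2 ⟨h2, fun m hm => not_lt.2 ((hS.monotone (Nat.succ_le_of_lt hm)).trans h1)⟩
  refine ⟨fun j => g (Nat.find (hex j)) (j - S (Nat.find (hex j))), fun n k hk => ?_⟩
  have hSn : S n < S (n + 1) := hS n.lt_add_one
  dsimp only
  rcases hk.lt_or_eq with hk | rfl
  · rw [hfind (Nat.le_add_right _ _) (by omega), Nat.add_sub_cancel_left]
  · rw [Nat.add_sub_cancel' hSn.le, hfind le_rfl (hS (n + 1).lt_add_one), Nat.sub_self, hg]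

end Glue

variable {Q A : Type} {Δ : Q → A → Q → Prop} {F : Q → Bool}

namespace DeltaStar

lemma exists_run {p q : Q} {w : List A} {b : Bool} (h : DeltaStar Δ F p w q b) :
    ∃ g : ℕ → Q, g 0 = p ∧ g w.length = q ∧
      (∀ k (hk : k < w.length), Δ (g k) w[k] (g (k + 1))) ∧
      (b = true → ∃ k ≤ w.length, F (g k) = true) := by
  induction h with
  | nil p =>
    exact ⟨fun _ => p, rfl, rfl, fun k hk => absurd hk (Nat.not_lt_zero k), fun h => ⟨0, le_rfl, h⟩⟩
  | cons p a hstep _ ih =>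
    obtain ⟨g, hg0, hglen, hgstep, hgF⟩ := ih
    refine ⟨fun | 0 => p | k + 1 => g k, rfl, hglen, ?_, ?_⟩
    · rintro (_ | k) hk
      · simpa [hg0] using hstep
      · simpa using hgstep k (by simpa using hk)
    · intro hb
      rcases Bool.or_eq_true_iff.mp hb with hp | hb
      · exact ⟨0, Nat.zero_le _, hp⟩
      · obtain ⟨k, hk, hF⟩ := hgF hb
        exact ⟨k + 1, by simpa using hk, hF⟩

lemma of_run (g : ℕ → Q) (w : List A) (hg : ∀ k (hk : k < w.length), Δ (g k) w[k] (g (k + 1))) :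
    ∃ b, DeltaStar Δ F (g 0) w (g w.length) b ∧ ∀ k ≤ w.length, F (g k) = true → b = true := by
  induction w generalizing g with
  | nil => exact ⟨F (g 0), .nil _, fun k hk hF => by rwa [Nat.le_zero.mp hk] at hF⟩
  | cons a w ih =>
    obtain ⟨b, hb, hbF⟩ := ih (fun k => g (k + 1)) fun k hk => hg (k + 1) (by simpa using hk)
    refine ⟨F (g 0) || b, .cons _ a (hg 0 (by simp)) hb, ?_⟩
    rintro (_ | k) hk hF
    · simp [hF]
    · simp [hbF k (by simpa using hk) hF]

end DeltaStar

def blockStart (σ : ℕ → List A) (n : ℕ) : ℕ := ∑ i ∈ range n, (σ i).length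

lemma blockStart_zero (σ : ℕ → List A) : blockStart σ 0 = 0 := rfl

lemma blockStart_succ (σ : ℕ → List A) (n : ℕ) :
    blockStart σ (n + 1) = blockStart σ n + (σ n).length :=
  sum_range_succ _ _

variable {σ : ℕ → List A} {ρ : ℕ → A}

lemma blockStart_strictMono (hne : ∀ i, σ i ≠ []) : StrictMono (blockStart σ) :=
  strictMono_nat_of_lt_succ fun n => by
    rw [blockStart_succ]
    exact Nat.lt_add_of_pos_right (List.length_pos_iff.2 (hne n))

lemma IsFlatten.apply_blockStart_add (hρ : IsFlatten σ ρ) (n k : ℕ) (hk : k < (σ n).length) :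
    ρ (blockStart σ n + k) = (σ n)[k] :=
  hρ n k hk

lemma DeltaOmega.exists_blocks (hne : ∀ i, σ i ≠ []) (hρ : IsFlatten σ ρ) {p : Q}
    (h : DeltaOmega Δ F p ρ) :
    ∃ (q : ℕ → Q) (b : ℕ → Bool), q 0 = p ∧
      (∀ n, DeltaStar Δ F (q n) (σ n) (q (n + 1)) (b n)) ∧ ∀ n, ∃ m, n ≤ m ∧ b m = true := by
  obtain ⟨r, rfl, hr, hinf⟩ := h
  have hS := blockStart_strictMono hne
  have hblock n := DeltaStar.of_run (F := F) (fun k => r (blockStart σ n + k)) (σ n)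
    fun k hk => hρ.apply_blockStart_add n k hk ▸ hr (blockStart σ n + k)
  choose b hb hbF using hblock
  refine ⟨fun n => r (blockStart σ n), b, rfl, fun n => by simpa [blockStart_succ] using hb n,
    fun n => ?_⟩
  obtain ⟨m, hnm, hm⟩ := hinf (blockStart σ n)
  obtain ⟨n', h1, h2⟩ := hS.exists_le_lt_succ (blockStart_zero σ) m
  have hn' : n ≤ n' := Nat.lt_succ_iff.1 (hS.lt_iff_lt.1 (hnm.trans_lt h2))
  rw [blockStart_succ] at h2
  exact ⟨n', hn', hbF n' (m - blockStart σ n') (by omega) (by rwa [Nat.add_sub_cancel' h1])⟩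

lemma deltaOmega_of_blocks (hne : ∀ i, σ i ≠ []) (hρ : IsFlatten σ ρ) {q : ℕ → Q} {b : ℕ → Bool}
    (hq : ∀ n, DeltaStar Δ F (q n) (σ n) (q (n + 1)) (b n)) (hb : ∀ n, ∃ m, n ≤ m ∧ b m = true) :
    DeltaOmega Δ F (q 0) ρ := by
  have hS := blockStart_strictMono hne
  choose g hg0 hglen hgstep hgF using fun n => (hq n).exists_run
  have hlen n : blockStart σ (n + 1) - blockStart σ n = (σ n).length := by
    rw [blockStart_succ, Nat.add_sub_cancel_left]
  obtain ⟨r, hr⟩ := hS.exists_glue g fun n => by rw [hg0, hlen, hglen]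
  refine ⟨r, by simpa [hg0, blockStart_zero] using hr 0 0 (Nat.zero_le _), fun i => ?_, fun n => ?_⟩
  · obtain ⟨n, h1, h2⟩ := hS.exists_le_lt_succ (blockStart_zero σ) i
    obtain ⟨k, rfl⟩ := Nat.exists_eq_add_of_le h1
    have hk : k < (σ n).length := by rw [blockStart_succ] at h2; omega
    rw [hr n k (by omega), add_assoc, hr n (k + 1) (by omega), hρ.apply_blockStart_add n k hk]
    exact hgstep n k hk
  · obtain ⟨m, hnm, hm⟩ := hb n
    obtain ⟨k, hk, hF⟩ := hgF m hm
    exact ⟨blockStart σ m + k, (hnm.trans hS.le_apply).trans (Nat.le_add_right _ _),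
      hr m k (by rwa [hlen]) ▸ hF⟩

lemma deltaOmega_iff_exists_blocks (hne : ∀ i, σ i ≠ []) (hρ : IsFlatten σ ρ) (p : Q) :
    DeltaOmega Δ F p ρ ↔ ∃ (q : ℕ → Q) (b : ℕ → Bool), q 0 = p ∧
      (∀ n, DeltaStar Δ F (q n) (σ n) (q (n + 1)) (b n)) ∧ ∀ n, ∃ m, n ≤ m ∧ b m = true :=
  ⟨DeltaOmega.exists_blocks hne hρ,
    fun ⟨_, _, hq0, hq, hb⟩ => hq0 ▸ deltaOmega_of_blocks hne hρ hq hb⟩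

theorem mequiv_infinite_concat_general {Q A : Type} (Δ : Q → A → Q → Prop) (F : Q → Bool)
    (σ σ' : ℕ → List A) (ρ ρ' : ℕ → A)
    (hne : ∀ i, σ i ≠ []) (hne' : ∀ i, σ' i ≠ [])
    (heq : ∀ i, MEquiv Δ F (σ i) (σ' i))
    (hρ : IsFlatten σ ρ) (hρ' : IsFlatten σ' ρ') :
    ∀ p : Q, DeltaOmega Δ F p ρ ↔ DeltaOmega Δ F p ρ' := by
  intro p
  rw [deltaOmega_iff_exists_blocks hne hρ, deltaOmega_iff_exists_blocks hne' hρ']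
  simp only [MEquiv] at heq
  simp only [heq]

/-- `M`-equivalence is preserved under infinite concatenation of
nonempty finite words. -/
theorem mequiv_infinite_concat {Q A : Type} [Finite Q] (Δ : Q → A → Q → Prop) (F : Q → Bool)
    (σ σ' : ℕ → List A) (ρ ρ' : ℕ → A)
    (hne : ∀ i, σ i ≠ []) (hne' : ∀ i, σ' i ≠ [])
    (heq : ∀ i, MEquiv Δ F (σ i) (σ' i))
    (hρ : IsFlatten σ ρ) (hρ' : IsFlatten σ' ρ') :
    ∀ p : Q, DeltaOmega Δ F p ρ ↔ DeltaOmega Δ F p ρ' :=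
  mequiv_infinite_concat_general Δ F σ σ' ρ ρ' hne hne' heq hρ hρ'
end

section
/- M-equivalence of finite words concatenated with M-equivalent infinite tails yields M-equivalent infinite words: if σ ≡_M σ' for finite words σ, σ', and ρ ≡_M ρ' for infinite words ρ, ρ' (meaning for all p: (p, ρ, true) ∈ Δ^ω ⟺ (p, ρ', true) ∈ Δ^ω), then σρ ≡_M σ'ρ' as infinite words. -/
/-! An accepting run on `σρ` is exactly a finite run on `σ` into some state `q`, with any
final-state flag `b`, followed by an accepting run on `ρ` from `q`. `M`-equivalence of `σ, σ'`
preserves the first part for every `(q, b)` and that of `ρ, ρ'` the second for every `q`. -/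

section BuchiRuns

variable {Q A : Type} {Δ : Q → A → Q → Prop} {F : Q → Bool}

lemma deltaStar_nil_iff {p q : Q} {b : Bool} :
    DeltaStar Δ F p [] q b ↔ q = p ∧ b = F p := by
  constructor
  · rintro ⟨⟩
    exact ⟨rfl, rfl⟩
  · rintro ⟨rfl, rfl⟩
    exact .nil q

lemma deltaStar_cons_iff {p r : Q} {a : A} {w : List A} {b : Bool} :
    DeltaStar Δ F p (a :: w) r b ↔
      ∃ q b', Δ p a q ∧ DeltaStar Δ F q w r b' ∧ b = (F p || b') := by
  constructor
  · rintro (_ | ⟨_, _, hpq, hqr⟩)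
    exact ⟨_, _, hpq, hqr, rfl⟩
  · rintro ⟨q, b', hpq, hqr, rfl⟩
    exact .cons p a hpq hqr

lemma deltaOmega_iff_exists_step {p : Q} {ρ : ℕ → A} :
    DeltaOmega Δ F p ρ ↔ ∃ q, Δ p (ρ 0) q ∧ DeltaOmega Δ F q (fun i => ρ (i + 1)) := by
  constructor
  · rintro ⟨r, rfl, hstep, hfinal⟩
    refine ⟨r 1, hstep 0, fun i => r (i + 1), rfl, fun i => hstep (i + 1), fun n => ?_⟩
    obtain ⟨_ | m, hnm, hm⟩ := hfinal (n + 1)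
    · omega
    · exact ⟨m, by omega, hm⟩
  · rintro ⟨q, hpq, r, rfl, hstep, hfinal⟩
    refine ⟨Stream'.cons p r, rfl, ?_, fun n => ?_⟩
    · rintro (_ | i)
      exacts [hpq, hstep i]
    · obtain ⟨m, hnm, hm⟩ := hfinal n
      exact ⟨m + 1, by omega, hm⟩

lemma appendInf_nil (ρ : ℕ → A) : appendInf [] ρ = ρ := by
  ext k
  simp [appendInf]

lemma appendInf_cons_zero (a : A) (σ : List A) (ρ : ℕ → A) : appendInf (a :: σ) ρ 0 = a := by
  simp [appendInf]

lemma appendInf_cons_succ (a : A) (σ : List A) (ρ : ℕ → A) :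
    (fun i => appendInf (a :: σ) ρ (i + 1)) = appendInf σ ρ := by
  ext k
  by_cases hk : k < σ.length <;> simp [appendInf, hk, Nat.add_sub_add_right]

theorem deltaOmega_appendInf_iff (σ : List A) (ρ : ℕ → A) (p : Q) :
    DeltaOmega Δ F p (appendInf σ ρ) ↔
      ∃ q b, DeltaStar Δ F p σ q b ∧ DeltaOmega Δ F q ρ := by
  induction σ generalizing p with
  | nil => simp [appendInf_nil, deltaStar_nil_iff]
  | cons a σ ih =>
    rw [deltaOmega_iff_exists_step, appendInf_cons_zero, appendInf_cons_succ]
    simp only [ih, deltaStar_cons_iff]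
    constructor
    · rintro ⟨q, hpq, r, b, hqr, hr⟩
      exact ⟨r, _, ⟨q, b, hpq, hqr, rfl⟩, hr⟩
    · rintro ⟨r, _, ⟨q, b, hpq, hqr, rfl⟩, hr⟩
      exact ⟨q, hpq, r, b, hqr, hr⟩

end BuchiRuns

theorem mequiv_append_inf_general {Q A : Type} (Δ : Q → A → Q → Prop) (F : Q → Bool)
    (σ σ' : List A) (ρ ρ' : ℕ → A)
    (hfin : MEquiv Δ F σ σ')
    (hinf : ∀ p : Q, DeltaOmega Δ F p ρ ↔ DeltaOmega Δ F p ρ') :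
    ∀ p : Q, DeltaOmega Δ F p (appendInf σ ρ) ↔ DeltaOmega Δ F p (appendInf σ' ρ') := by
  intro p
  simp only [deltaOmega_appendInf_iff]
  exact exists_congr fun q => exists_congr fun b => and_congr (hfin p q b) (hinf q)

/-- concatenating `M`-equivalent finite words with `M`-equivalent
infinite tails yields `M`-equivalent infinite words. -/
theorem mequiv_append_inf {Q A : Type} [Finite Q] (Δ : Q → A → Q → Prop) (F : Q → Bool)
    (σ σ' : List A) (ρ ρ' : ℕ → A)
    (hfin : MEquiv Δ F σ σ')
    (hinf : ∀ p : Q, DeltaOmega Δ F p ρ ↔ DeltaOmega Δ F p ρ') :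
    ∀ p : Q, DeltaOmega Δ F p (appendInf σ ρ) ↔ DeltaOmega Δ F p (appendInf σ' ρ') :=
  mequiv_append_inf_general Δ F σ σ' ρ ρ' hfin hinf
end

section
/- Hyperedge replacement is associative in the following sense: if H, J are hypergraphs with H containing exactly one hyperedge, and K̄ is a hyperedge assignment for J, then H[J[K̄]] = H[J][K̄], i.e., replacing H's hyperedge by the graph J[K̄] yields the same hypergraph (up to isomorphism) as first replacing H's hyperedge by J and then replacing the hyperedges inherited from J according to K̄. -/
/-- A hypergraph `H = (V, n, →, E, α, γ, ℓ)`: finitely many concrete nodes `V`,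
abstract nodes `Fin n`, a labeled edge relation on `W = V ⊕ Fin n`, finitely many
hyperedges `E` with attached-node sequences, a node coloring, and hyperedge labels. -/
structure Hypergraph' (COL ACT LAB : Type) : Type 1 where
  V : Type
  finV : Finite V
  n : ℕ
  E : Type
  finE : Finite E
  edge : (V ⊕ Fin n) → ACT → (V ⊕ Fin n) → Prop
  att : E → List (V ⊕ Fin n)
  col : V → Set COL
  lab : E → LAB

variable {COL ACT LAB : Type}

/-- Concrete nodes of the hypergraph obtained by replacing every hyperedge `e` of `H`
by the hypergraph `K e`. -/
abbrev RepV (H : Hypergraph' COL ACT LAB) (K : H.E → Hypergraph' COL ACT LAB) : Type :=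
  H.V ⊕ (Σ e : H.E, (K e).V)

/-- Embedding of the nodes of `H` into the nodes of the replacement `H[K]`. -/
def emb (H : Hypergraph' COL ACT LAB) (K : H.E → Hypergraph' COL ACT LAB) :
    (H.V ⊕ Fin H.n) → (RepV H K ⊕ Fin H.n) :=
  Sum.map Sum.inl id

/-- The map `f_e` sending the `i`-th abstract node of `K e` to the `i`-th node attached
to `e` in `H`, and acting as the (tagged) identity on concrete nodes of `K e`. -/
def fmap (H : Hypergraph' COL ACT LAB) (K : H.E → Hypergraph' COL ACT LAB)
    (harity : ∀ e, (K e).n = (H.att e).length) (e : H.E) :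
    ((K e).V ⊕ Fin (K e).n) → (RepV H K ⊕ Fin H.n)
  | Sum.inl v => Sum.inl (Sum.inr ⟨e, v⟩)
  | Sum.inr i => emb H K ((H.att e).get (Fin.cast (harity e) i))

/-- Hyperedge replacement `H[K]`: every hyperedge `e` of `H` is replaced by the
hypergraph `K e`, identifying the `i`-th abstract node of `K e` with the `i`-th node
attached to `e`. -/
def replace (H : Hypergraph' COL ACT LAB) (K : H.E → Hypergraph' COL ACT LAB)
    (harity : ∀ e, (K e).n = (H.att e).length) : Hypergraph' COL ACT LAB where
  V := RepV H K
  finV := by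
    haveI := H.finV; haveI := H.finE
    haveI : ∀ e : H.E, Finite (K e).V := fun e => (K e).finV
    infer_instance
  n := H.n
  E := Σ e : H.E, (K e).E
  finE := by
    haveI := H.finE
    haveI : ∀ e : H.E, Finite (K e).E := fun e => (K e).finE
    infer_instance
  edge := fun u a v =>
    (∃ u' v', H.edge u' a v' ∧ u = emb H K u' ∧ v = emb H K v') ∨
    (∃ e u' v', (K e).edge u' a v' ∧ u = fmap H K harity e u' ∧ v = fmap H K harity e v')
  att := fun p => ((K p.1).att p.2).map (fmap H K harity p.1)
  col := fun v => Sum.elim H.col (fun q => (K q.1).col q.2) v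
  lab := fun p => (K p.1).lab p.2

/-- An isomorphism of hypergraphs: bijections on concrete nodes and hyperedges
(fixing abstract nodes up to the equality of arities) preserving edges, attachments,
colors and labels. -/
structure HGIso (H₁ H₂ : Hypergraph' COL ACT LAB) where
  hn : H₁.n = H₂.n
  eV : H₁.V ≃ H₂.V
  eE : H₁.E ≃ H₂.E
  hedge : ∀ u a v, H₁.edge u a v ↔
    H₂.edge (Sum.map (⇑eV) (Fin.cast hn) u) a (Sum.map (⇑eV) (Fin.cast hn) v)
  hatt : ∀ e, H₂.att (eE e) = (H₁.att e).map (Sum.map (⇑eV) (Fin.cast hn))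
  hcol : ∀ v, H₂.col (eV v) = H₁.col v
  hlab : ∀ e, H₂.lab (eE e) = H₁.lab e

/-! Both `H[J[K]]` and `H[J][K]` have the concrete nodes of `H`, of every `J e` and of every
`K e e'`, and the hyperedges of every `K e e'`; they differ only in how the sums and sigma
types are bracketed. Rebracketing is an isomorphism because attachment composes: the `i`-th
node attached to `⟨e, e'⟩` in `H[J]` is the image under `f_e` of the `i`-th node attached to
`e'` in `J e`. Hence a node of `K e e'` lands in the same place whether it is first glued
into `J e` and then into `H`, or glued directly into `H[J]`. -/

section Assoc

variable (H : Hypergraph' COL ACT LAB) (J : H.E → Hypergraph' COL ACT LAB)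
  (K : ∀ e, (J e).E → Hypergraph' COL ACT LAB)
  (hJ : ∀ e, (J e).n = (H.att e).length)
  (hK : ∀ e e', (K e e').n = ((J e).att e').length)

/-- `H[J[K]]`, where each hyperedge `e` of `H` is replaced by `(J e)[K e]`. -/
abbrev replaceInner : Hypergraph' COL ACT LAB :=
  replace H (fun e => replace (J e) (K e) (hK e)) hJ

/-- `H[J][K]`, where the hyperedge `⟨e, e'⟩` of `H[J]` is replaced by `K e e'`. -/
abbrev replaceOuter : Hypergraph' COL ACT LAB :=
  replace (replace H J hJ) (fun ee => K ee.1 ee.2)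
    (fun ee => (hK ee.1 ee.2).trans (List.length_map _).symm)

def replaceAssocNodeEquiv : (replaceInner H J K hJ hK).V ≃ (replaceOuter H J K hJ hK).V where
  toFun
    | .inl v => .inl (.inl v)
    | .inr ⟨e, .inl w⟩ => .inl (.inr ⟨e, w⟩)
    | .inr ⟨e, .inr ⟨e', x⟩⟩ => .inr ⟨⟨e, e'⟩, x⟩
  invFun
    | .inl (.inl v) => .inl v
    | .inl (.inr ⟨e, w⟩) => .inr ⟨e, .inl w⟩
    | .inr ⟨⟨e, e'⟩, x⟩ => .inr ⟨e, .inr ⟨e', x⟩⟩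
  left_inv := by rintro (v | ⟨e, w | ⟨e', x⟩⟩) <;> rfl
  right_inv := by rintro ((v | ⟨e, w⟩) | ⟨⟨e, e'⟩, x⟩) <;> rfl

def replaceAssocEdgeEquiv : (replaceInner H J K hJ hK).E ≃ (replaceOuter H J K hJ hK).E :=
  (Equiv.sigmaAssoc _).symm

abbrev replaceAssocNodeMap :
    (replaceInner H J K hJ hK).V ⊕ Fin H.n → (replaceOuter H J K hJ hK).V ⊕ Fin H.n :=
  Sum.map (replaceAssocNodeEquiv H J K hJ hK) (Fin.cast rfl)

theorem replaceAssocNodeMap_injective : (replaceAssocNodeMap H J K hJ hK).Injective :=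
  (Equiv.sumCongr (replaceAssocNodeEquiv H J K hJ hK) (finCongr rfl)).injective

theorem replaceAssocNodeMap_emb (u : H.V ⊕ Fin H.n) :
    replaceAssocNodeMap H J K hJ hK (emb H _ u) = emb _ _ (emb H J u) := by
  cases u <;> rfl

theorem replaceAssocNodeMap_fmap_emb (e : H.E) (w : (J e).V ⊕ Fin (J e).n) :
    replaceAssocNodeMap H J K hJ hK (fmap H _ hJ e (emb (J e) (K e) w)) =
      emb _ _ (fmap H J hJ e w) := by
  cases w with
  | inl w => rfl
  | inr i => exact replaceAssocNodeMap_emb H J K hJ hK _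

theorem replaceAssocNodeMap_fmap_fmap (e : H.E) (e' : (J e).E)
    (w : (K e e').V ⊕ Fin (K e e').n) :
    replaceAssocNodeMap H J K hJ hK (fmap H _ hJ e (fmap (J e) (K e) (hK e) e' w)) =
      fmap (replace H J hJ) (fun ee => K ee.1 ee.2)
        (fun ee => (hK ee.1 ee.2).trans (List.length_map _).symm) ⟨e, e'⟩ w := by
  cases w with
  | inl x => rfl
  | inr i =>
    refine (replaceAssocNodeMap_fmap_emb H J K hJ hK e _).trans (congrArg (emb _ _) ?_)
    exact (List.getElem_map _).symm

theorem replaceInner_edge_iff (u : (replaceInner H J K hJ hK).V ⊕ Fin H.n) (a : ACT)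
    (v : (replaceInner H J K hJ hK).V ⊕ Fin H.n) :
    (replaceInner H J K hJ hK).edge u a v ↔
      (replaceOuter H J K hJ hK).edge (replaceAssocNodeMap H J K hJ hK u) a
        (replaceAssocNodeMap H J K hJ hK v) := by
  have hΦ := replaceAssocNodeMap_injective H J K hJ hK
  constructor
  · rintro (⟨p, q, h, rfl, rfl⟩ | ⟨e, p, q, hJK | ⟨e', p, q, hK', rfl, rfl⟩, rfl, rfl⟩)
    · exact .inl ⟨_, _, .inl ⟨p, q, h, rfl, rfl⟩,
        replaceAssocNodeMap_emb .., replaceAssocNodeMap_emb ..⟩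
    · obtain ⟨p, q, h, rfl, rfl⟩ := hJK
      exact .inl ⟨_, _, .inr ⟨e, p, q, h, rfl, rfl⟩,
        replaceAssocNodeMap_fmap_emb .., replaceAssocNodeMap_fmap_emb ..⟩
    · exact .inr ⟨⟨e, e'⟩, p, q, hK',
        replaceAssocNodeMap_fmap_fmap .., replaceAssocNodeMap_fmap_fmap ..⟩
  · rintro (⟨_, _, ⟨p, q, h, rfl, rfl⟩ | ⟨e, p, q, h, rfl, rfl⟩, hu, hv⟩ |
      ⟨⟨e, e'⟩, p, q, h, hu, hv⟩)
    · rw [← replaceAssocNodeMap_emb H J K hJ hK] at hu hv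
      exact .inl ⟨p, q, h, hΦ hu, hΦ hv⟩
    · rw [← replaceAssocNodeMap_fmap_emb H J K hJ hK] at hu hv
      exact .inr ⟨e, _, _, .inl ⟨p, q, h, rfl, rfl⟩, hΦ hu, hΦ hv⟩
    · rw [← replaceAssocNodeMap_fmap_fmap H J K hJ hK] at hu hv
      exact .inr ⟨e, _, _, .inr ⟨e', p, q, h, rfl, rfl⟩, hΦ hu, hΦ hv⟩

def replaceAssocIso : HGIso (replaceInner H J K hJ hK) (replaceOuter H J K hJ hK) where
  hn := rfl
  eV := replaceAssocNodeEquiv H J K hJ hK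
  eE := replaceAssocEdgeEquiv H J K hJ hK
  hedge := replaceInner_edge_iff H J K hJ hK
  hatt := by
    rintro ⟨e, e', x⟩
    show ((K e e').att x).map (fmap (replace H J hJ) _ _ ⟨e, e'⟩) =
      ((((K e e').att x).map (fmap _ _ _ e')).map (fmap _ _ _ e)).map
        (replaceAssocNodeMap H J K hJ hK)
    -- `erw`: `replace H J hJ`'s hyperedges form a sigma type only after unfolding `replace`
    erw [List.map_map, List.map_map]
    exact List.map_congr_left fun w _ => (replaceAssocNodeMap_fmap_fmap H J K hJ hK e e' w).symm
  hcol := by rintro (v | ⟨e, w | ⟨e', x⟩⟩) <;> rfl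
  hlab _ := rfl

end Assoc

theorem replace_assoc_general
    (H J : Hypergraph' COL ACT LAB) (K : J.E → Hypergraph' COL ACT LAB)
    (hJ : ∀ e : H.E, J.n = (H.att e).length)
    (hK : ∀ e', (K e').n = (J.att e').length) :
    Nonempty (HGIso
      (replace H (fun _ => replace J K hK) (fun e => hJ e))
      (replace (replace H (fun _ => J) hJ) (fun ee => K ee.2)
        (fun ee => (hK ee.2).trans (List.length_map _).symm))) :=
  ⟨replaceAssocIso H (fun _ => J) (fun _ => K) hJ (fun _ => hK)⟩

/-- associativity of hyperedge replacement. If `H` has exactly one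
hyperedge (witnessed by `e₀` and `huniq`), `J` is a hypergraph of matching arity and
`K̄` a hyperedge assignment for `J`, then `H[J[K̄]]` and `H[J][K̄]` are isomorphic. -/
theorem replace_assoc
    (H J : Hypergraph' COL ACT LAB) (K : J.E → Hypergraph' COL ACT LAB)
    (e₀ : H.E) (huniq : ∀ e : H.E, e = e₀)
    (hJ : ∀ e : H.E, J.n = (H.att e).length)
    (hK : ∀ e', (K e').n = (J.att e').length) :
    Nonempty (HGIso
      (replace H (fun _ => replace J K hK) (fun e => hJ e))
      (replace (replace H (fun _ => J) hJ) (fun ee => K ee.2)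
        (fun ee => (hK ee.2).trans (List.length_map _).symm))) :=
  replace_assoc_general H J K hJ hK
end
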